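/- (Reconstruction of the ruling direction ξ^t) Let λ, μ ∈ ℝ with 1 − (1 + λ²)ζ′(s)² > 0 for all s ∈ [0,L]; set ψ := √(1 + λ²), σ_λ(s) := √(1 − (1 + λ²)ζ′(s)²), c_{λ,μ}(s) := (μ + ∫₀ˢ σ_λ(w) dw, ζ(s), λζ(s)), T_λ := c_{λ,μ}′, N_λ(s) := c_{λ,μ}″(s)/‖c_{λ,μ}″(s)‖, B_λ(s) := T_λ(s) × N_λ(s). Define cos β(s) := −ζ′(s), sin β(s) := √(1 − ζ′(s)²), cos α_λ(s) := σ_λ(s)/(ψ·√(1 − ζ′(s)²)), sin α_λ(s) := −λ/(ψ·√(1 − ζ′(s)²)). Then cos α_λ(s)² + sin α_λ(s)² = 1, and for all s ∈ (0,L): cos β(s)·T_λ(s) + sin β(s)·(cos α_λ(s)·N_λ(s) − sin α_λ(s)·B_λ(s)) = (1/(1 + λ²))·(0, λ² − 1, −2λ). -/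

import Mathlib

open Real Set

noncomputable section

/-- Euclidean 3-space. -/
abbrev E3 : Type := EuclideanSpace ℝ (Fin 3)

/-- The vector `(x, y, z)` in `ℝ³`. -/
def v3 (x y z : ℝ) : E3 := WithLp.toLp 2 ![x, y, z]

/-- The cross product in `ℝ³`. -/
def cross3 (u w : E3) : E3 :=
  v3 (u 1 * w 2 - u 2 * w 1) (u 2 * w 0 - u 0 * w 2) (u 0 * w 1 - u 1 * w 0)

/-- `σ(s) = √(1 − 2 ζ′(s)²)`. -/
def sig (ζ : ℝ → ℝ) (s : ℝ) : ℝ := Real.sqrt (1 - 2 * (deriv ζ s) ^ 2)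

/-- The crease `c(s) = (∫₀ˢ σ(w) dw, ζ(s), ζ(s))`. -/
def crease (ζ : ℝ → ℝ) (s : ℝ) : E3 :=
  v3 (∫ w in (0:ℝ)..s, sig ζ w) (ζ s) (ζ s)

/-- The crease pattern `γ(s) = (∫₀ˢ √(1 − ζ′(w)²) dw, ζ(s), 0)`. -/
def pattern (ζ : ℝ → ℝ) (s : ℝ) : E3 :=
  v3 (∫ w in (0:ℝ)..s, Real.sqrt (1 - (deriv ζ w) ^ 2)) (ζ s) 0

/-- The curvature `κ(s) = ‖c″(s)‖` of a space curve. -/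
def curv (c : ℝ → E3) (s : ℝ) : ℝ := ‖deriv (deriv c) s‖

/-- The principal normal `N(s) = c″(s)/κ(s)` of a space curve. -/
def nvec (c : ℝ → E3) (s : ℝ) : E3 := (curv c s)⁻¹ • deriv (deriv c) s

/-- The binormal `B(s) = c′(s) × N(s)` of a space curve. -/
def bvec (c : ℝ → E3) (s : ℝ) : E3 := cross3 (deriv c s) (nvec c s)

/-- `σ_λ(s) = √(1 − (1 + λ²) ζ′(s)²)`. -/
def sigL (ζ : ℝ → ℝ) (lam s : ℝ) : ℝ :=
  Real.sqrt (1 - (1 + lam ^ 2) * (deriv ζ s) ^ 2)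

/-- The deformed crease `c_{λ,μ}(s) = (μ + ∫₀ˢ σ_λ(w) dw, ζ(s), λζ(s))`. -/
def creaseL (ζ : ℝ → ℝ) (lam mu s : ℝ) : E3 :=
  v3 (mu + ∫ w in (0:ℝ)..s, sigL ζ lam w) (ζ s) (lam * ζ s)

/-- The deformed ruling direction `ξ_λ = (1/(1+λ²))·(0, λ² − 1, −2λ)`. -/
def xiL (lam : ℝ) : E3 := (1 + lam ^ 2)⁻¹ • v3 0 (lam ^ 2 - 1) (-(2 * lam))

lemma hasDerivAt_v3 {f g h : ℝ → ℝ} {f' g' h' s : ℝ}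
    (hf : HasDerivAt f f' s) (hg : HasDerivAt g g' s) (hh : HasDerivAt h h' s) :
    HasDerivAt (fun t => v3 (f t) (g t) (h t)) (v3 f' g' h') s := by
  have hpi : HasDerivAt (fun t => ![f t, g t, h t] : ℝ → (Fin 3 → ℝ)) ![f', g', h'] s := by
    rw [hasDerivAt_pi]
    intro i
    fin_cases i
    · simpa using hf
    · simpa using hg
    · simpa using hh
  exact ((PiLp.continuousLinearEquiv 2 ℝ (fun _ : Fin 3 => ℝ)).symm :
      (Fin 3 → ℝ) →L[ℝ] E3).hasFDerivAt.comp_hasDerivAt s hpi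

lemma v3_smul (r x y z : ℝ) : r • v3 x y z = v3 (r*x) (r*y) (r*z) := by
  ext i; fin_cases i <;> simp [v3]

lemma v3_add (a b c d e f : ℝ) : v3 a b c + v3 d e f = v3 (a+d) (b+e) (c+f) := by
  ext i; fin_cases i <;> simp [v3]

lemma v3_sub (a b c d e f : ℝ) : v3 a b c - v3 d e f = v3 (a-d) (b-e) (c-f) := by
  ext i; fin_cases i <;> simp [v3]

lemma norm_v3 (x y z : ℝ) : ‖v3 x y z‖ = Real.sqrt (x^2+y^2+z^2) := by
  rw [EuclideanSpace.norm_eq]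
  simp [v3, Fin.sum_univ_three, sq_abs]

lemma v3_congr {a b c d e f : ℝ} (h1 : a = d) (h2 : b = e) (h3 : c = f) :
    v3 a b c = v3 d e f := by rw [h1, h2, h3]

lemma cross3_v3 (a b c d e f : ℝ) :
    cross3 (v3 a b c) (v3 d e f) = v3 (b*f - c*e) (c*d - a*f) (a*e - b*d) := by
  simp [cross3, v3]

/-- reconstruction of the ruling direction `ξ^t`. With
`cos β = −ζ′`, `sin β = √(1 − ζ′²)`, `cos α_λ = σ_λ/(ψ√(1 − ζ′²))`,
`sin α_λ = −λ/(ψ√(1 − ζ′²))` (where `ψ = √(1 + λ²)`), one has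
`cos²α_λ + sin²α_λ = 1` and
`cos β·T_λ + sin β·(cos α_λ·N_λ − sin α_λ·B_λ) = ξ_λ`. -/
theorem deformed_ruling_reconstruction
    (b L : ℝ) (hb : 0 < b) (hL : 0 < L) (ζ : ℝ → ℝ) (hζ : ContDiff ℝ (⊤ : ℕ∞) ζ)
    (hζ0 : ζ 0 = 0) (hζL : ζ L = 0)
    (hslope : ∀ s ∈ Set.Icc (0:ℝ) L, 0 < 1 - 2 * (deriv ζ s) ^ 2)
    (hrange : ∀ s ∈ Set.Ioo (0:ℝ) L, 0 < ζ s ∧ ζ s < b)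
    (hconc : ∀ s ∈ Set.Ioo (0:ℝ) L, deriv (deriv ζ) s < 0)
    (lam mu : ℝ)
    (hlam : ∀ s ∈ Set.Icc (0:ℝ) L, 0 < 1 - (1 + lam ^ 2) * (deriv ζ s) ^ 2) :
    ∀ s ∈ Set.Ioo (0:ℝ) L,
      (sigL ζ lam s / (Real.sqrt (1 + lam ^ 2) * Real.sqrt (1 - (deriv ζ s) ^ 2))) ^ 2
        + (-lam / (Real.sqrt (1 + lam ^ 2) * Real.sqrt (1 - (deriv ζ s) ^ 2))) ^ 2 = 1 ∧
      (-(deriv ζ s)) • deriv (creaseL ζ lam mu) s +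
        Real.sqrt (1 - (deriv ζ s) ^ 2) •
          ((sigL ζ lam s / (Real.sqrt (1 + lam ^ 2) * Real.sqrt (1 - (deriv ζ s) ^ 2))) •
              nvec (creaseL ζ lam mu) s -
            (-lam / (Real.sqrt (1 + lam ^ 2) * Real.sqrt (1 - (deriv ζ s) ^ 2))) •
              bvec (creaseL ζ lam mu) s)
        = xiL lam := by

  have hSm : ContDiff ℝ ((⊤:ℕ∞):WithTop ℕ∞) ζ := hζ.of_le (by simp)
  have h1 : ContDiff ℝ ((⊤:ℕ∞):WithTop ℕ∞) (deriv ζ) := by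
    have := ContDiff.iterate_deriv 1 hSm; simpa using this
  have hcσ : Continuous (sigL ζ lam) := by
    unfold sigL
    exact (continuous_const.sub (continuous_const.mul (h1.continuous.pow 2))).sqrt
  have hc' : ∀ t, HasDerivAt (creaseL ζ lam mu)
      (v3 (sigL ζ lam t) (deriv ζ t) (lam * deriv ζ t)) t := by
    intro t
    have hint : HasDerivAt (fun u => ∫ w in (0:ℝ)..u, sigL ζ lam w) (sigL ζ lam t) t :=
      intervalIntegral.integral_hasDerivAt_right (hcσ.intervalIntegrable 0 t)
        (hcσ.stronglyMeasurableAtFilter _ _) hcσ.continuousAt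
    have h1t : HasDerivAt ζ (deriv ζ t) t := (hζ.differentiable (by simp) t).hasDerivAt
    unfold creaseL
    exact hasDerivAt_v3 (hint.const_add mu) h1t (h1t.const_mul lam)
  have hdc : deriv (creaseL ζ lam mu) =
      fun t => v3 (sigL ζ lam t) (deriv ζ t) (lam * deriv ζ t) :=
    funext fun t => (hc' t).deriv
  intro s hs
  have hps : 0 < 1 - (1+lam^2)*(deriv ζ s)^2 := by
    have := hlam s (Ioo_subset_Icc_self hs); linarith
  have hψ2pos : (0:ℝ) < 1 + lam^2 := by positivity
  have hz1lt : (deriv ζ s)^2 < 1 := by nlinarith [sq_nonneg lam, sq_nonneg (deriv ζ s)]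
  have hσpos : 0 < sigL ζ lam s := Real.sqrt_pos.mpr hps
  have hρpos : 0 < Real.sqrt (1 - (deriv ζ s)^2) := Real.sqrt_pos.mpr (by linarith)
  have hψpos : 0 < Real.sqrt (1 + lam^2) := Real.sqrt_pos.mpr hψ2pos
  have hσsq : (sigL ζ lam s)^2 = 1 - (1+lam^2)*(deriv ζ s)^2 := Real.sq_sqrt hps.le
  have hψsq : (Real.sqrt (1+lam^2))^2 = 1+lam^2 := Real.sq_sqrt hψ2pos.le
  have hρsq : (Real.sqrt (1 - (deriv ζ s)^2))^2 = 1 - (deriv ζ s)^2 :=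
    Real.sq_sqrt (by linarith)
  have hz2neg : deriv (deriv ζ) s < 0 := hconc s hs
  have hd : HasDerivAt (deriv ζ) (deriv (deriv ζ) s) s :=
    (h1.differentiable (by simp) s).hasDerivAt
  have hσ' : HasDerivAt (sigL ζ lam)
      (-((1+lam^2) * deriv ζ s * deriv (deriv ζ) s) / sigL ζ lam s) s := by
    have hin : HasDerivAt (fun t => 1 - (1+lam^2)*(deriv ζ t)^2)
        (-((1+lam^2)*(2 * deriv ζ s * deriv (deriv ζ) s))) s := by
      have := HasDerivAt.const_sub 1 ((hd.pow 2).const_mul (1+lam^2))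
      simpa [mul_comm, mul_assoc, mul_left_comm] using this
    have h2 := hin.sqrt (ne_of_gt hps)
    convert h2 using 1
    · rfl
    have hrfl : Real.sqrt (1 - (1+lam^2)*(deriv ζ s)^2) = sigL ζ lam s := rfl
    rw [hrfl]
    field_simp
  have hc'' : HasDerivAt (deriv (creaseL ζ lam mu))
      (v3 (-((1+lam^2) * deriv ζ s * deriv (deriv ζ) s) / sigL ζ lam s)
        (deriv (deriv ζ) s) (lam * deriv (deriv ζ) s)) s := by
    rw [hdc]
    exact hasDerivAt_v3 hσ' hd (hd.const_mul lam)
  have hdd : deriv (deriv (creaseL ζ lam mu)) s =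
      v3 (-((1+lam^2) * deriv ζ s * deriv (deriv ζ) s) / sigL ζ lam s)
        (deriv (deriv ζ) s) (lam * deriv (deriv ζ) s) := hc''.deriv
  have hT : deriv (creaseL ζ lam mu) s =
      v3 (sigL ζ lam s) (deriv ζ s) (lam * deriv ζ s) := (hc' s).deriv
  have hκ : curv (creaseL ζ lam mu) s =
      Real.sqrt (1+lam^2) * (-(deriv (deriv ζ) s)) / sigL ζ lam s := by
    unfold curv
    rw [hdd, norm_v3]
    rw [show (-((1+lam^2) * deriv ζ s * deriv (deriv ζ) s) / sigL ζ lam s)^2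
        + (deriv (deriv ζ) s)^2 + (lam * deriv (deriv ζ) s)^2
        = (Real.sqrt (1+lam^2) * (-(deriv (deriv ζ) s)) / sigL ζ lam s)^2 from by
      field_simp [hσpos.ne']
      linear_combination ((1+lam^2) * (deriv (deriv ζ) s)^2) * hσsq
        - (deriv (deriv ζ) s)^2 * hψsq]
    exact Real.sqrt_sq (div_nonneg (mul_nonneg hψpos.le (by linarith)) hσpos.le)
  have hN : nvec (creaseL ζ lam mu) s =
      v3 (Real.sqrt (1+lam^2) * deriv ζ s)
        (-(sigL ζ lam s / Real.sqrt (1+lam^2)))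
        (-(lam * (sigL ζ lam s / Real.sqrt (1+lam^2)))) := by
    unfold nvec
    rw [hκ, hdd, v3_smul]
    apply v3_congr
    · field_simp [hσpos.ne', hψpos.ne', hρpos.ne', hz2neg.ne]
      linear_combination (-(deriv ζ s)) * hψsq
    · field_simp [hσpos.ne', hψpos.ne', hρpos.ne', hz2neg.ne]
    · field_simp [hσpos.ne', hψpos.ne', hρpos.ne', hz2neg.ne]
  have hB : bvec (creaseL ζ lam mu) s =
      v3 0 (lam / Real.sqrt (1+lam^2)) (-(1 / Real.sqrt (1+lam^2))) := by
    unfold bvec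
    rw [hT, hN, cross3_v3]
    apply v3_congr
    · ring
    · field_simp [hσpos.ne', hψpos.ne', hρpos.ne', hz2neg.ne]
      linear_combination (lam * (deriv ζ s)^2) * hψsq + lam * hσsq
    · field_simp [hσpos.ne', hψpos.ne', hρpos.ne', hz2neg.ne]
      linear_combination (-1 : ℝ) * hσsq - (deriv ζ s)^2 * hψsq
  refine ⟨?_, ?_⟩
  · rw [div_pow, div_pow, mul_pow, hσsq, hψsq, hρsq, ← add_div,
      div_eq_one_iff_eq (ne_of_gt (by nlinarith))]
    ring
  · rw [hT, hN, hB, v3_smul, v3_smul, v3_smul, v3_sub, v3_smul, v3_add]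
    unfold xiL
    rw [v3_smul]
    apply v3_congr
    · field_simp [hσpos.ne', hψpos.ne', hρpos.ne', hz2neg.ne]
      ring
    · field_simp [hσpos.ne', hψpos.ne', hρpos.ne', hz2neg.ne]
      linear_combination (-((1+lam^2)*(deriv ζ s)^2 + lam^2 - 1)) * hψsq + (-(1+lam^2)) * hσsq
    · field_simp [hσpos.ne', hψpos.ne', hρpos.ne', hz2neg.ne]
      linear_combination (-lam*(1+lam^2)*(deriv ζ s)^2 + 2*lam) * hψsq + (-lam*(1+lam^2)) * hσsq
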